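/- If X is a Corson compact space, then its Alexandroff duplicate AD(X) is also Corson compact. -/

import Mathlib

open Filter Topology Set

universe u v

/-- `[X]^{≤ω}`: the countable subsets of `X`, ordered by inclusion. -/
abbrev CtbSet (X : Type*) := {A : Set X // A.Countable}

/-- A map between families of countable sets is `ω`-monotone if it is monotone with respect to
inclusion and preserves unions of increasing `ω`-chains. -/
def OmegaMonotone {X Y : Type*} (φ : CtbSet X → CtbSet Y) : Prop :=
  (∀ A B : CtbSet X, A.1 ⊆ B.1 → (φ A).1 ⊆ (φ B).1) ∧
  ∀ (A : ℕ → CtbSet X) (B : CtbSet X), (∀ n, (A n).1 ⊆ (A (n + 1)).1) →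
    B.1 = ⋃ n, (A n).1 → (φ B).1 = ⋃ n, (φ (A n)).1

/-- An assignment of sets indexed by a poset `Γ` is `ω`-monotone if it is order preserving and
sends suprema of increasing `ω`-chains to the union of the images. -/
def OmegaMonotoneIdx {Γ Y : Type*} [Preorder Γ] (D : Γ → Set Y) : Prop :=
  (∀ s t : Γ, s ≤ t → D s ⊆ D t) ∧
  ∀ (s : ℕ → Γ) (t : Γ), Monotone s → IsLUB (Set.range s) t → D t = ⋃ n, D (s n)

/-- `N` is a network of the map `f`. -/
def IsNetworkOfMap {X Y : Type*} [TopologicalSpace Y] (N : Set (Set X)) (f : X → Y) : Prop :=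
  ∀ x : X, ∀ U : Set Y, IsOpen U → f x ∈ U → ∃ M ∈ N, x ∈ M ∧ f '' M ⊆ U

/-- `q : X → Y` is an `ℝ`-quotient map. -/
def RQuotient {X Y : Type*} [TopologicalSpace X] [TopologicalSpace Y] (q : X → Y) : Prop :=
  Continuous q ∧ Function.Surjective q ∧ ∀ g : Y → ℝ, Continuous (g ∘ q) → Continuous g

/-- The family `r` of retractions indexed by `Γ` is an `r`-skeleton on `X`. -/
structure IsRSkeleton {X : Type*} [TopologicalSpace X] {Γ : Type*} [PartialOrder Γ]
    (r : Γ → X → X) : Prop where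
  directed : ∀ s t : Γ, ∃ u, s ≤ u ∧ t ≤ u
  sigma : ∀ s : ℕ → Γ, Monotone s → ∃ t, IsLUB (Set.range s) t
  cont : ∀ s, Continuous (r s)
  retract : ∀ s x, r s (r s x) = r s x
  cosmic : ∀ s, ∃ N : Set (Set X), N.Countable ∧ (∀ M ∈ N, M ⊆ Set.range (r s)) ∧
    ∀ x ∈ Set.range (r s), ∀ U : Set X, IsOpen U → x ∈ U → ∃ M ∈ N, x ∈ M ∧ M ⊆ U
  comm₁ : ∀ s t : Γ, s ≤ t → ∀ x, r s (r t x) = r s x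
  comm₂ : ∀ s t : Γ, s ≤ t → ∀ x, r t (r s x) = r s x
  chain : ∀ (s : ℕ → Γ) (t : Γ), Monotone s → IsLUB (Set.range s) t →
    ∀ x, Tendsto (fun n => r (s n) x) atTop (𝓝 (r t x))
  toId : ∀ x : X, Tendsto (fun s : Γ => r s x) atTop (𝓝 x)

def IsFullRSkeleton {X : Type*} [TopologicalSpace X] {Γ : Type*} [PartialOrder Γ]
    (r : Γ → X → X) : Prop :=
  IsRSkeleton r ∧ ∀ x : X, ∃ s : Γ, x ∈ Set.range (r s)

def HasFullRSkeleton (X : Type u) [TopologicalSpace X] : Prop :=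
  ∃ (Γ : Type u) (inst : PartialOrder Γ) (r : Γ → X → X), @IsFullRSkeleton X _ Γ inst r

/-- A strong `r`-skeleton: an `r`-skeleton such that for every index `s`, every `n` and every
closed subset `F` of `X^n` there is `t ≥ s` whose `n`-th power maps `F` into itself. -/
def IsStrongRSkeleton {X : Type*} [TopologicalSpace X] {Γ : Type*} [PartialOrder Γ]
    (r : Γ → X → X) : Prop :=
  IsRSkeleton r ∧ ∀ (s : Γ) (n : ℕ) (F : Set (Fin n → X)), IsClosed F →
    ∃ t : Γ, s ≤ t ∧ (fun (v : Fin n → X) (i : Fin n) => r t (v i)) '' F ⊆ F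

def HasStrongRSkeleton (X : Type u) [TopologicalSpace X] : Prop :=
  ∃ (Γ : Type u) (inst : PartialOrder Γ) (r : Γ → X → X), @IsStrongRSkeleton X _ Γ inst r

/-- A `q`-skeleton on `X` indexed by the up-directed σ-complete poset `Γ`. -/
structure QSkeleton (X : Type u) [TopologicalSpace X] (Γ : Type v) [PartialOrder Γ] where
  Xs : Γ → Type u
  top : ∀ s, TopologicalSpace (Xs s)
  q : ∀ s, X → Xs s
  D : Γ → Set X
  directed : ∀ s t : Γ, ∃ u, s ≤ u ∧ t ≤ u
  sigma : ∀ s : ℕ → Γ, Monotone s → ∃ t, IsLUB (Set.range s) t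
  rquot : ∀ s, @RQuotient X (Xs s) _ (top s) (q s)
  D_ctble : ∀ s, (D s).Countable
  dense : ∀ s, @Dense (Xs s) (top s) (q s '' D s)
  proj : ∀ s t : Γ, s ≤ t → ∃ p : Xs t → Xs s, @Continuous _ _ (top t) (top s) p ∧
    Function.Surjective p ∧ ∀ x, q s x = p (q t x)
  Dmono : OmegaMonotoneIdx D

/-- The `q`-skeleton is full: `C_p(X) = ⋃_s q_s^*(C_p(X_s))`. -/
def QSkeleton.Full {X : Type u} [TopologicalSpace X] {Γ : Type v} [PartialOrder Γ]
    (S : QSkeleton X Γ) : Prop :=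
  ∀ f : X → ℝ, Continuous f →
    ∃ (s : Γ) (g : S.Xs s → ℝ), @Continuous _ _ (S.top s) _ g ∧ f = g ∘ S.q s

def HasFullQSkeleton (X : Type u) [TopologicalSpace X] : Prop :=
  ∃ (Γ : Type u) (inst : PartialOrder Γ) (S : @QSkeleton X _ Γ inst), S.Full

/-- `C_p(X)`: continuous real-valued functions with the topology of pointwise convergence. -/
abbrev Cp (X : Type u) [TopologicalSpace X] : Type u := {f : X → ℝ // Continuous f}

/-- The diagonal map `Δ_A : X → ℝ^A` of a set `A ⊆ C_p(X)`. -/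
def cpDiag {X : Type u} [TopologicalSpace X] (A : Set (Cp X)) (x : X) : ↥A → ℝ :=
  fun f => f.1.1 x

/-- The topology of the Alexandroff duplicate on `X × Bool`. -/
def ADTopology (X : Type*) [TopologicalSpace X] : TopologicalSpace (X × Bool) where
  IsOpen V := ∀ p ∈ V, p.2 = false →
    ∃ U : Set X, IsOpen U ∧ p.1 ∈ U ∧ {q : X × Bool | q.1 ∈ U ∧ q ≠ (p.1, true)} ⊆ V
  isOpen_univ := fun p _ _ => ⟨Set.univ, isOpen_univ, trivial, fun _ _ => trivial⟩
  isOpen_inter := fun A B hA hB p hp hb => by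
    obtain ⟨U, hU, hxU, hUA⟩ := hA p hp.1 hb
    obtain ⟨W, hW, hxW, hWB⟩ := hB p hp.2 hb
    exact ⟨U ∩ W, hU.inter hW, ⟨hxU, hxW⟩,
      fun q hq => ⟨hUA ⟨hq.1.1, hq.2⟩, hWB ⟨hq.1.2, hq.2⟩⟩⟩
  isOpen_sUnion := fun S hS p hp hb => by
    obtain ⟨V, hV, hpV⟩ := hp
    obtain ⟨U, hU, hxU, hUV⟩ := hS V hV p hpV hb
    exact ⟨U, hU, hxU, fun q hq => ⟨V, hV, hUV hq⟩⟩

/-- The Alexandroff duplicate of `X`. -/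
def AD (X : Type u) [TopologicalSpace X] : Type u := X × Bool

instance (X : Type u) [TopologicalSpace X] : TopologicalSpace (AD X) := ADTopology X

/-- A compact Hausdorff space is Corson compact if it embeds into a Σ-product of real lines. -/
def IsCorsonCompact (X : Type u) [TopologicalSpace X] : Prop :=
  CompactSpace X ∧ T2Space X ∧ ∃ (κ : Type u) (e : X → κ → ℝ),
    IsEmbedding e ∧ ∀ x, {i | e x i ≠ 0}.Countable

/-- The assignments `r`, `N` witness that `X` is monotonically retractable. -/
structure MonRetractableWitness (X : Type u) [TopologicalSpace X]
    (r : CtbSet X → X → X) (N : CtbSet X → CtbSet (Set X)) : Prop where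
  cont : ∀ A, Continuous (r A)
  retract : ∀ A x, r A (r A x) = r A x
  sub : ∀ A : CtbSet X, A.1 ⊆ Set.range (r A)
  network : ∀ A, IsNetworkOfMap (N A).1 (r A)
  mono : OmegaMonotone N

def MonotonicallyRetractable (X : Type u) [TopologicalSpace X] : Prop :=
  ∃ (r : CtbSet X → X → X) (N : CtbSet X → CtbSet (Set X)), MonRetractableWitness X r N

/-- `X` is monotonically `ω`-stable. -/
def MonotonicallyOmegaStable (X : Type u) [TopologicalSpace X] : Prop :=
  ∃ N : CtbSet (Cp X) → CtbSet (Set X), OmegaMonotone N ∧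
    ∀ A : CtbSet (Cp X), IsNetworkOfMap (N A).1 (cpDiag (closure A.1))

/-- A subset `K` is countably compact: every countable open cover of `K` has a finite subcover. -/
def IsCountablyCompactSet {X : Type*} [TopologicalSpace X] (K : Set X) : Prop :=
  ∀ U : ℕ → Set X, (∀ n, IsOpen (U n)) → K ⊆ ⋃ n, U n → ∃ t : Finset ℕ, K ⊆ ⋃ n ∈ t, U n

/-- The closure of `A` under `φ`. -/
def phiBar {X : Type*} (φ : CtbSet X → CtbSet X) (A : CtbSet X) : Set X :=
  ⋂₀ {B : Set X | ∃ hB : B.Countable, A.1 ⊆ B ∧ (φ ⟨B, hB⟩).1 ⊆ B}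

/-- The iterates `φ_n` of `φ`: `φ_0(A) = A`, `φ_{n+1}(A) = φ_n(A) ∪ φ(φ_n(A))`. -/
def phiIter {X : Type*} (φ : CtbSet X → CtbSet X) : ℕ → CtbSet X → CtbSet X
  | 0, A => A
  | n + 1, A => ⟨(phiIter φ n A).1 ∪ (φ (phiIter φ n A)).1,
      (phiIter φ n A).2.union (φ (phiIter φ n A)).2⟩

/-!
Embed `AD X` into `ℝ^(κ ⊕ X)` by `e ∘ fst` on the `κ` coordinates and, at coordinate `y : X`,
the indicator of the isolated point `(y, true)`. Every point of `X × {true}` is clopen once `X`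
is `T₁`, so this map is continuous; it is clearly injective, and it adds at most one nonzero
coordinate to the support of `e x`. A continuous injection of the compact space `AD X` into a
Hausdorff space is an embedding, which also makes `AD X` Hausdorff.
-/

theorem IsCorsonCompact.of_continuous_injective {Y κ : Type u} [TopologicalSpace Y]
    [CompactSpace Y] {f : Y → κ → ℝ} (hf : Continuous f) (hinj : Function.Injective f)
    (hsupp : ∀ y, {i | f y i ≠ 0}.Countable) : IsCorsonCompact Y :=
  haveI : T2Space Y := T2Space.of_injective_continuous hinj hf
  ⟨‹_›, this, κ, f, (hf.isClosedEmbedding hinj).isEmbedding, hsupp⟩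

namespace AD

variable {X : Type u} [TopologicalSpace X]

theorem isOpen_iff {V : Set (AD X)} : IsOpen V ↔ ∀ p ∈ V, p.2 = false →
    ∃ U : Set X, IsOpen U ∧ p.1 ∈ U ∧ {q : X × Bool | q.1 ∈ U ∧ q ≠ (p.1, true)} ⊆ V :=
  Iff.rfl

theorem continuous_fst : Continuous fun p : AD X => p.1 :=
  continuous_def.mpr fun U hU _ hp _ => ⟨U, hU, hp, fun _ hq => hq.1⟩

theorem le_nhds_false (x : X) :
    comap (fun p : AD X => p.1) (𝓝 x) ⊓ 𝓟 {(x, true)}ᶜ ≤ @nhds (AD X) _ (x, false) := by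
  intro V hV
  obtain ⟨W, hWV, hW, hxW⟩ := mem_nhds_iff.mp hV
  obtain ⟨U, hU, hxU, hUW⟩ := isOpen_iff.mp hW (x, false) hxW rfl
  exact mem_inf_of_inter (preimage_mem_comap (hU.mem_nhds hxU)) (mem_principal_self _)
    fun q hq => hWV (hUW ⟨hq.1, hq.2⟩)

instance [CompactSpace X] : CompactSpace (AD X) := by
  refine ⟨isCompact_iff_ultrafilter_le_nhds.mpr fun f _ => ?_⟩
  obtain ⟨x, -, hx⟩ := isCompact_univ.ultrafilter_le_nhds (f.map fun p : AD X => p.1) (by simp)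
  rcases f.mem_or_compl_mem {(x, true)} with hmem | hcompl
  · exact ⟨(x, true), trivial, fun V hV =>
      mem_of_superset hmem (singleton_subset_iff.mpr (mem_of_mem_nhds (X := AD X) hV))⟩
  · exact ⟨(x, false), trivial, le_trans
      (le_inf (map_le_iff_le_comap.mp hx) (le_principal_iff.mpr hcompl)) (le_nhds_false x)⟩

theorem isOpen_singleton_true (x : X) : IsOpen ({(x, true)} : Set (AD X)) := by
  rintro p rfl ⟨⟩

theorem isClosed_singleton_true [T1Space X] (x : X) : IsClosed ({(x, true)} : Set (AD X)) := by
  refine ⟨fun p hp _ => ?_⟩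
  by_cases hpx : p.1 = x
  · exact ⟨univ, isOpen_univ, trivial, fun q hq => hpx ▸ hq.2⟩
  · refine ⟨{x}ᶜ, isOpen_compl_singleton, hpx, fun q hq hqx => hq.1 ?_⟩
    rw [mem_singleton_iff.mp hqx]
    rfl

variable {κ : Type u}

noncomputable def sigmaEmbedding (e : X → κ → ℝ) (p : AD X) : κ ⊕ X → ℝ :=
  Sum.elim (e p.1) fun y => ({(y, true)} : Set (AD X)).indicator 1 p

variable {e : X → κ → ℝ}

theorem continuous_sigmaEmbedding [T1Space X] (he : Continuous e) :
    Continuous (sigmaEmbedding e) := by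
  refine continuous_pi fun j => ?_
  rcases j with i | y
  · exact (continuous_apply i).comp (he.comp continuous_fst)
  · exact IsClopen.continuous_indicator ⟨isClosed_singleton_true y, isOpen_singleton_true y⟩
      continuous_const

theorem sigmaEmbedding_inr_ne_zero_iff {p : AD X} {y : X} :
    sigmaEmbedding e p (.inr y) ≠ 0 ↔ p = (y, true) := by
  simp only [sigmaEmbedding, Sum.elim_inr, ne_eq, indicator_apply_eq_zero, Pi.one_apply,
    one_ne_zero, imp_false, not_not]
  exact mem_singleton_iff

theorem injective_sigmaEmbedding (he : Function.Injective e) :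
    Function.Injective (sigmaEmbedding e) := by
  rintro ⟨x, a⟩ ⟨y, b⟩ hxy
  obtain rfl : x = y := he (funext fun i => congrFun hxy (.inl i))
  have key (c : Bool) : sigmaEmbedding e (x, c) (.inr x) ≠ 0 ↔ c = true :=
    sigmaEmbedding_inr_ne_zero_iff.trans ⟨congrArg Prod.snd, by rintro rfl; rfl⟩
  obtain rfl : a = b := Bool.eq_iff_iff.mpr (by rw [← key, ← key, congrFun hxy])
  rfl

theorem countable_support_sigmaEmbedding (hsupp : ∀ x, {i | e x i ≠ 0}.Countable) (p : AD X) :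
    {j | sigmaEmbedding e p j ≠ 0}.Countable := by
  refine (((hsupp p.1).image Sum.inl).union (countable_singleton (Sum.inr p.1))).mono ?_
  rintro (i | y) hj
  · exact .inl ⟨i, hj, rfl⟩
  · obtain rfl := sigmaEmbedding_inr_ne_zero_iff.mp hj
    exact .inr rfl

end AD

theorem isCorsonCompact_AD (X : Type u) [TopologicalSpace X]
    (h : IsCorsonCompact X) : IsCorsonCompact (AD X) := by
  obtain ⟨_, _, κ, e, he, hsupp⟩ := h
  exact .of_continuous_injective (AD.continuous_sigmaEmbedding he.continuous)
    (AD.injective_sigmaEmbedding he.injective) (AD.countable_support_sigmaEmbedding hsupp)
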